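/- Let G be a metrizable topological group admitting a compatible complete left-invariant metric. Then G is Roelcke-precompact (for every neighborhood U of the identity there is a finite F ⊆ G with G = UFU) if and only if G is compact. -/

import Mathlib

/-!
Compact groups are Roelcke-precompact by compactness of the cover `G = ⋃_{f} U f`.
Conversely, let `d` be a complete left-invariant metric and `(u n)` a sequence in `G`.
Roelcke-precompactness with `U` the ball of radius `2⁻ᵏ⁻¹` and pigeonhole on the finite set `F`
produce nested infinite index sets on which `u n ∈ B(2⁻ᵏ) u m B(2⁻ᵏ)`; a diagonal subsequence
then satisfies `v (k+1) = α k * v k * β k` with `α k, β k` within `2⁻ᵏ` of `1`. Hence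
`v k = (α₀⁻¹ ⋯ αₖ₋₁⁻¹)⁻¹ * v 0 * (β₀ ⋯ βₖ₋₁)`, and both products are Cauchy for the
left-invariant metric because they grow by right multiplication with small elements.
Completeness makes them converge, so `v` converges and `G` is sequentially compact.
-/

open Filter Topology Metric Set

def IsRoelckePrecompact (G : Type*) [Group G] [TopologicalSpace G] : Prop :=
  ∀ U ∈ 𝓝 (1 : G), ∃ F : Finset G, ∀ g : G, ∃ u ∈ U, ∃ f ∈ F, ∃ v ∈ U, g = u * f * v

theorem IsRoelckePrecompact.of_compactSpace {G : Type*} [Group G] [TopologicalSpace G]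
    [ContinuousMul G] [CompactSpace G] : IsRoelckePrecompact G := by
  intro U hU
  obtain ⟨F, -, hF⟩ := isCompact_univ.elim_nhds_subcover (fun f => (· * f⁻¹) ⁻¹' U)
    fun f _ => (continuous_mul_const f⁻¹).continuousAt.preimage_mem_nhds (by simpa using hU)
  refine ⟨F, fun g => ?_⟩
  obtain ⟨f, hf, hgf⟩ := mem_iUnion₂.1 (hF (mem_univ g))
  exact ⟨g * f⁻¹, hgf, f, hf, 1, mem_of_mem_nhds hU, by group⟩

theorem exists_strictMono_forall_rel_succ {R : ℕ → ℕ → ℕ → Prop}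
    (h : ∀ k (S : Set ℕ), S.Infinite → ∃ T ⊆ S, T.Infinite ∧ ∀ m ∈ T, ∀ n ∈ T, R k m n) :
    ∃ φ : ℕ → ℕ, StrictMono φ ∧ ∀ k, R k (φ k) (φ (k + 1)) := by
  choose T' hT'sub hT'inf hT'R using h
  let T : ℕ → {S : Set ℕ // S.Infinite} := fun k =>
    Nat.rec ⟨univ, infinite_univ⟩ (fun k S => ⟨T' k S.1 S.2, hT'inf k S.1 S.2⟩) k
  obtain ⟨φ, hφ, hφT⟩ := extraction_forall_of_frequently fun k =>
    Nat.frequently_atTop_iff_infinite.2 (T (k + 1)).2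
  exact ⟨φ, hφ, fun k => hT'R k _ _ _ (hφT k) _ (hT'sub _ _ _ (hφT (k + 1)))⟩

section LeftInvariantMetric

variable {G : Type*} [Group G] [PseudoMetricSpace G] [IsIsometricSMul G G]

theorem dist_self_mul (a b : G) : dist a (a * b) = dist b 1 := by
  rw [dist_comm, ← dist_mul_left a b 1, mul_one]

theorem dist_inv_one (a : G) : dist a⁻¹ 1 = dist a 1 := by
  rw [← dist_self_mul a, mul_inv_cancel, dist_comm]

theorem dist_mul_one_le (a b : G) : dist (a * b) 1 ≤ dist a 1 + dist b 1 :=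
  calc dist (a * b) 1 ≤ dist (a * b) a + dist a 1 := dist_triangle _ _ _
    _ = dist a 1 + dist b 1 := by rw [dist_comm, dist_self_mul, add_comm]

theorem mul_mem_ball_one {a b : G} {δ δ' : ℝ} (ha : a ∈ ball 1 δ) (hb : b ∈ ball 1 δ') :
    a * b ∈ ball 1 (δ + δ') :=
  (dist_mul_one_le a b).trans_lt (add_lt_add ha hb)

theorem inv_mem_ball_one {a : G} {r : ℝ} : a⁻¹ ∈ ball 1 r ↔ a ∈ ball 1 r := by
  simp only [mem_ball, dist_inv_one]

theorem cauchySeq_prod_range_map {w : ℕ → G} {r : ℝ} (hr : r < 1)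
    (hw : ∀ k, dist (w k) 1 ≤ r ^ k) : CauchySeq fun k => ((List.range k).map w).prod :=
  cauchySeq_of_le_geometric r 1 hr fun k => by
    rw [List.prod_range_succ, dist_self_mul, one_mul]
    exact hw k

theorem exists_tendsto_of_eq_mul_mul [IsTopologicalGroup G] [CompleteSpace G] {v α β : ℕ → G}
    {r : ℝ} (hr : r < 1) (hα : ∀ k, dist (α k) 1 ≤ r ^ k)
    (hβ : ∀ k, dist (β k) 1 ≤ r ^ k) (hv : ∀ k, v (k + 1) = α k * v k * β k) :
    ∃ x, Tendsto v atTop (𝓝 x) := by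
  set A := fun k => ((List.range k).map fun i => (α i)⁻¹).prod
  set B := fun k => ((List.range k).map β).prod
  have hvAB : ∀ k, (A k)⁻¹ * v 0 * B k = v k := by
    intro k
    induction k with
    | zero => simp [A, B]
    | succ k ih => simp only [A, B, List.prod_range_succ, hv, ← ih]; group
  obtain ⟨a, ha⟩ := cauchySeq_tendsto_of_complete
    (cauchySeq_prod_range_map hr fun k => (dist_inv_one (α k)).trans_le (hα k))
  obtain ⟨b, hb⟩ := cauchySeq_tendsto_of_complete (cauchySeq_prod_range_map hr hβ)
  exact ⟨a⁻¹ * v 0 * b, ((ha.inv.mul_const (v 0)).mul hb).congr hvAB⟩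

theorem IsRoelckePrecompact.exists_infinite_subset_eq_mul_mul (hG : IsRoelckePrecompact G)
    (u : ℕ → G) {ε : ℝ} (hε : 0 < ε) {S : Set ℕ} (hS : S.Infinite) :
    ∃ T ⊆ S, T.Infinite ∧ ∀ m ∈ T, ∀ n ∈ T,
      ∃ a ∈ ball (1 : G) ε, ∃ b ∈ ball (1 : G) ε, u n = a * u m * b := by
  obtain ⟨F, hF⟩ := hG _ (ball_mem_nhds 1 (half_pos hε))
  choose a ha f hf b hb hafb using hF
  obtain ⟨c, -, hc⟩ : ∃ c ∈ (f ∘ u) '' S, (S ∩ (f ∘ u) ⁻¹' {c}).Infinite := by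
    by_contra! hfin
    exact hS (.of_finite_fibers (f ∘ u)
      (F.finite_toSet.subset (image_subset_iff.2 fun n _ => hf (u n))) hfin)
  refine ⟨S ∩ (f ∘ u) ⁻¹' {c}, inter_subset_left, hc, fun m hm n hn => ?_⟩
  have hfmn : f (u n) = f (u m) := hn.2.trans hm.2.symm
  refine ⟨a (u n) * (a (u m))⁻¹, ?_, (b (u m))⁻¹ * b (u n), ?_, ?_⟩
  · simpa using mul_mem_ball_one (ha (u n)) (inv_mem_ball_one.2 (ha (u m)))
  · simpa using mul_mem_ball_one (inv_mem_ball_one.2 (hb (u m))) (hb (u n))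
  · calc u n = a (u n) * f (u m) * b (u n) := by rw [← hfmn]; exact hafb (u n)
      _ = a (u n) * (a (u m))⁻¹ * (a (u m) * f (u m) * b (u m)) * ((b (u m))⁻¹ * b (u n)) := by
        group
      _ = _ := by rw [← hafb (u m)]

theorem IsRoelckePrecompact.seqCompactSpace [IsTopologicalGroup G] [CompleteSpace G]
    (hG : IsRoelckePrecompact G) : SeqCompactSpace G := by
  refine ⟨fun u _ => ?_⟩
  obtain ⟨φ, hφ, hchain⟩ := exists_strictMono_forall_rel_succ fun k _ hS =>
    hG.exists_infinite_subset_eq_mul_mul u (pow_pos (half_pos one_pos) k) hS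
  choose α hα β hβ hαβ using hchain
  obtain ⟨x, hx⟩ := exists_tendsto_of_eq_mul_mul (v := u ∘ φ) (half_lt_self one_pos)
    (fun k => (hα k).le) (fun k => (hβ k).le) hαβ
  exact ⟨x, mem_univ x, φ, hφ, hx⟩

end LeftInvariantMetric

/-- a metrizable topological group with a compatible complete left-invariant
metric is Roelcke-precompact (for every neighborhood `U` of `1` there is a finite `F` with
`G = U F U`) iff it is compact. -/
theorem stmt_15 {G : Type*} [Group G] [TopologicalSpace G] [IsTopologicalGroup G]
    (dL : G → G → ℝ)
    (hsymm : ∀ x y, dL x y = dL y x)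
    (hzero : ∀ x y, dL x y = 0 ↔ x = y)
    (htri : ∀ x y z, dL x z ≤ dL x y + dL y z)
    (hinv : ∀ g x y, dL (g * x) (g * y) = dL x y)
    (hcompat : ∀ (x : G) (s : Set G), s ∈ 𝓝 x ↔ ∃ ε > (0:ℝ), {y | dL x y < ε} ⊆ s)
    (hcomplete : ∀ u : ℕ → G,
      (∀ ε > (0:ℝ), ∃ N, ∀ m ≥ N, ∀ n ≥ N, dL (u m) (u n) < ε) →
      ∃ x : G, Filter.Tendsto (fun n => dL (u n) x) Filter.atTop (𝓝 0)) :
    (∀ U ∈ 𝓝 (1 : G), ∃ F : Finset G, ∀ g : G,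
        ∃ u ∈ U, ∃ f ∈ F, ∃ v ∈ U, g = u * f * v) ↔
      CompactSpace G := by
  let : PseudoMetricSpace G := .ofDistTopology dL (fun x => (hzero x x).2 rfl) hsymm htri
    fun s => by simp only [isOpen_iff_mem_nhds, hcompat]; rfl
  have : IsIsometricSMul G G := ⟨fun g => Isometry.of_dist_eq (hinv g)⟩
  have : CompleteSpace G := Metric.complete_of_cauchySeq_tendsto fun u hu =>
    (hcomplete u (Metric.cauchySeq_iff.1 hu)).imp fun _ => tendsto_iff_dist_tendsto_zero.2
  exact ⟨fun hG => compactSpace_iff_seqCompactSpace.2 (IsRoelckePrecompact.seqCompactSpace hG),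
    fun _ => IsRoelckePrecompact.of_compactSpace⟩
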